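/- arXiv:1904.12504 — 4 statements merged into one kernel-verified Lean document; each statement's English description precedes it below -/
import Mathlib

section
/- Assume Q is in normal form: q_{2i,2i-1} = q_i, q_{2i-1,2i} = q_i^{-1} for 1 ≤ i ≤ z where q_i is a primitive k_i-th root of unity, and all other q_{ij} = 1. Then the radical subgroup R equals ⊕_{i=1}^z ( Z k_i e_{2i-1} ⊕ Z k_i e_{2i} ) ⊕ ⊕_{l>2z} Z e_l, and the quotient group Γ = Z^d / R satisfies Γ ≅ ∏_{i=1}^z (Z/k_i)², so |Γ| = ∏_{i=1}^z k_i² = N² where N = ∏_{i=1}^z k_i. -/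
/-- The bicharacter `σ(m,n) = ∏_{i<j} q_{ji}^{n_j m_i}`. -/
noncomputable def qsigma {d : ℕ} (q : Fin d → Fin d → ℂ) (m n : Fin d → ℤ) : ℂ :=
  ∏ j : Fin d, ∏ i : Fin d, if i < j then q j i ^ (n j * m i) else 1

/-- `R = { m ∈ ℤ^d | σ(m,n) = σ(n,m) for all n }`. -/
def radSet {d : ℕ} (q : Fin d → Fin d → ℂ) : Set (Fin d → ℤ) :=
  {m | ∀ n, qsigma q m n = qsigma q n m}

/-- for `Q` in normal form (`q_{2i,2i-1} = qᵢ` a primitive `kᵢ`-th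
root of unity, `q_{2i-1,2i} = qᵢ⁻¹`, all other entries `1`; here `e₀ i`, `e₁ i`
are the indices `2i-1`, `2i` in `0`-based form `2i`, `2i+1`), the radical
subgroup `R` consists exactly of the `m` whose `(2i-1)`-st and `2i`-th
coordinates are divisible by `kᵢ` (and arbitrary elsewhere), i.e.
`R = ⊕ᵢ (ℤkᵢ e_{2i-1} ⊕ ℤkᵢ e_{2i}) ⊕ ⊕_{l>2z} ℤ e_l`, and
`Γ = ℤ^d / R ≅ ∏ᵢ (ℤ/kᵢ)²`, so `|Γ| = ∏ᵢ kᵢ²`. -/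
theorem stmt4 {d z : ℕ} (h2z : 2 * z ≤ d)
    (k : Fin z → ℕ) (hk : ∀ i, 0 < k i)
    (qi : Fin z → ℂ) (hprim : ∀ i, IsPrimitiveRoot (qi i) (k i))
    (e₀ e₁ : Fin z → Fin d)
    (he₀ : ∀ i, (e₀ i : ℕ) = 2 * (i : ℕ)) (he₁ : ∀ i, (e₁ i : ℕ) = 2 * (i : ℕ) + 1)
    (q : Fin d → Fin d → ℂ)
    (hq1 : ∀ i, q (e₁ i) (e₀ i) = qi i)
    (hq2 : ∀ i, q (e₀ i) (e₁ i) = (qi i)⁻¹)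
    (hq3 : ∀ a b : Fin d,
      (∀ i, ¬(a = e₁ i ∧ b = e₀ i) ∧ ¬(a = e₀ i ∧ b = e₁ i)) → q a b = 1) :
    ∃ S : AddSubgroup (Fin d → ℤ),
      (S : Set (Fin d → ℤ)) = radSet q ∧
      radSet q = {m | ∀ i : Fin z, (k i : ℤ) ∣ m (e₀ i) ∧ (k i : ℤ) ∣ m (e₁ i)} ∧
      Nonempty (((Fin d → ℤ) ⧸ S) ≃+ Π i : Fin z, ZMod (k i) × ZMod (k i)) ∧
      Nat.card ((Fin d → ℤ) ⧸ S) = ∏ i : Fin z, (k i) ^ 2 := by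
  haveI hNZ : ∀ i : Fin z, NeZero (k i) := fun i => ⟨(hk i).ne'⟩
  have he01 : ∀ i j : Fin z, e₀ i ≠ e₁ j := by
    intro i j h
    have := congrArg Fin.val h
    rw [he₀, he₁] at this; omega
  have he0inj : Function.Injective e₀ := by
    intro a b h
    have := congrArg Fin.val h
    rw [he₀, he₀] at this
    exact Fin.ext (by omega)
  have he1inj : Function.Injective e₁ := by
    intro a b h
    have := congrArg Fin.val h
    rw [he₁, he₁] at this
    exact Fin.ext (by omega)
  have hlt : ∀ t, e₀ t < e₁ t := by
    intro t; rw [Fin.lt_def, he₀, he₁]; omega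
  -- the key formula for σ
  have hsig : ∀ m n : Fin d → ℤ,
      qsigma q m n = ∏ t : Fin z, (qi t) ^ (n (e₁ t) * m (e₀ t)) := by
    intro m n
    unfold qsigma
    rw [← Fintype.prod_prod_type']
    have hsub : ((Finset.univ : Finset (Fin z)).image
        fun t => ((e₁ t, e₀ t) : Fin d × Fin d)) ⊆ Finset.univ := Finset.subset_univ _
    have hout : ∀ p ∈ (Finset.univ : Finset (Fin d × Fin d)),
        p ∉ ((Finset.univ : Finset (Fin z)).image fun t => ((e₁ t, e₀ t) : Fin d × Fin d)) →
        (if p.2 < p.1 then q p.1 p.2 ^ (n p.1 * m p.2) else 1) = 1 := by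
      intro p _ hp
      by_cases h : p.2 < p.1
      · rw [if_pos h, hq3 p.1 p.2 ?_, one_zpow]
        intro t
        refine ⟨?_, ?_⟩
        · rintro ⟨h1, h2⟩
          exact hp (Finset.mem_image.mpr ⟨t, Finset.mem_univ t, by
            rw [← h1, ← h2]⟩)
        · rintro ⟨h1, h2⟩
          rw [h1, h2] at h
          exact absurd h (not_lt.mpr (hlt t).le)
      · rw [if_neg h]
    have hinj : ∀ a ∈ (Finset.univ : Finset (Fin z)), ∀ b ∈ Finset.univ,
        (fun t => ((e₁ t, e₀ t) : Fin d × Fin d)) a =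
          (fun t => ((e₁ t, e₀ t) : Fin d × Fin d)) b → a = b := by
      intro a _ b _ h
      exact he1inj (congrArg Prod.fst h)
    rw [← Finset.prod_subset hsub hout, Finset.prod_image hinj]
    refine Finset.prod_congr rfl fun t _ => ?_
    rw [if_pos (hlt t), hq1]
  -- characterization of the radical
  have hR : radSet q = {m | ∀ i : Fin z, (k i : ℤ) ∣ m (e₀ i) ∧ (k i : ℤ) ∣ m (e₁ i)} := by
    ext m
    simp only [radSet, Set.mem_setOf_eq]
    constructor
    · intro h s
      constructor
      · have h1 := h (fun a => if a = e₁ s then 1 else 0)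
        rw [hsig, hsig] at h1
        have hL : (∏ t : Fin z, qi t ^ ((if e₁ t = e₁ s then (1:ℤ) else 0) * m (e₀ t)))
            = qi s ^ (m (e₀ s)) := by
          rw [Finset.prod_eq_single s]
          · rw [if_pos rfl, one_mul]
          · intro t _ ht
            rw [if_neg (fun hh => ht (he1inj hh)), zero_mul, zpow_zero]
          · exact fun h => absurd (Finset.mem_univ s) h
        have hRr : (∏ t : Fin z, qi t ^ (m (e₁ t) * (if e₀ t = e₁ s then (1:ℤ) else 0)))
            = 1 := by
          apply Finset.prod_eq_one
          intro t _
          rw [if_neg (he01 t s), mul_zero, zpow_zero]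
        rw [hL, hRr] at h1
        exact ((hprim s).zpow_eq_one_iff_dvd _).mp h1
      · have h1 := h (fun a => if a = e₀ s then 1 else 0)
        rw [hsig, hsig] at h1
        have hL : (∏ t : Fin z, qi t ^ ((if e₁ t = e₀ s then (1:ℤ) else 0) * m (e₀ t)))
            = 1 := by
          apply Finset.prod_eq_one
          intro t _
          rw [if_neg (fun hh => he01 s t hh.symm), zero_mul, zpow_zero]
        have hRr : (∏ t : Fin z, qi t ^ (m (e₁ t) * (if e₀ t = e₀ s then (1:ℤ) else 0)))
            = qi s ^ (m (e₁ s)) := by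
          rw [Finset.prod_eq_single s]
          · rw [if_pos rfl, mul_one]
          · intro t _ ht
            rw [if_neg (fun hh => ht (he0inj hh)), mul_zero, zpow_zero]
          · exact fun h => absurd (Finset.mem_univ s) h
        rw [hL, hRr] at h1
        exact ((hprim s).zpow_eq_one_iff_dvd _).mp h1.symm
    · intro h n
      rw [hsig, hsig]
      have h1 : (∏ t : Fin z, qi t ^ (n (e₁ t) * m (e₀ t))) = 1 :=
        Finset.prod_eq_one fun t _ =>
          ((hprim t).zpow_eq_one_iff_dvd _).mpr (Dvd.dvd.mul_left (h t).1 _)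
      have h2 : (∏ t : Fin z, qi t ^ (m (e₁ t) * n (e₀ t))) = 1 :=
        Finset.prod_eq_one fun t _ =>
          ((hprim t).zpow_eq_one_iff_dvd _).mpr (Dvd.dvd.mul_right (h t).2 _)
      rw [h1, h2]
  -- the subgroup
  let S : AddSubgroup (Fin d → ℤ) :=
    { carrier := {m | ∀ i : Fin z, (k i : ℤ) ∣ m (e₀ i) ∧ (k i : ℤ) ∣ m (e₁ i)}
      zero_mem' := fun i => ⟨dvd_zero _, dvd_zero _⟩
      add_mem' := fun ha hb i => ⟨(ha i).1.add (hb i).1, (ha i).2.add (hb i).2⟩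
      neg_mem' := fun ha i => ⟨dvd_neg.mpr (ha i).1, dvd_neg.mpr (ha i).2⟩ }
  have hSmem : ∀ m, m ∈ S ↔ ∀ i : Fin z, (k i : ℤ) ∣ m (e₀ i) ∧ (k i : ℤ) ∣ m (e₁ i) :=
    fun m => Iff.rfl
  let φ : (Fin d → ℤ) →+ Π i : Fin z, ZMod (k i) × ZMod (k i) :=
    { toFun := fun m i => ((m (e₀ i) : ZMod (k i)), (m (e₁ i) : ZMod (k i))),
      map_zero' := by funext i; simp,
      map_add' := by intro a b; funext i; simp [Prod.ext_iff] }
  have hφ : ∀ m j, φ m j = (((m (e₀ j) : ℤ) : ZMod (k j)), ((m (e₁ j) : ℤ) : ZMod (k j))) :=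
    fun _ _ => rfl
  have hker : φ.ker = S := by
    ext m
    rw [AddMonoidHom.mem_ker, hSmem]
    constructor
    · intro h i
      have := congrFun h i
      rw [hφ] at this
      rw [Prod.ext_iff] at this
      exact ⟨(ZMod.intCast_zmod_eq_zero_iff_dvd _ _).mp this.1,
        (ZMod.intCast_zmod_eq_zero_iff_dvd _ _).mp this.2⟩
    · intro h
      funext i
      rw [hφ]
      refine Prod.ext ?_ ?_
      · exact (ZMod.intCast_zmod_eq_zero_iff_dvd _ _).mpr (h i).1
      · exact (ZMod.intCast_zmod_eq_zero_iff_dvd _ _).mpr (h i).2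
  have hsurj : Function.Surjective φ := by
    intro x
    refine ⟨(∑ i : Fin z, (Pi.single (e₀ i) (((x i).1.val : ℤ)) +
      Pi.single (e₁ i) (((x i).2.val : ℤ))) : Fin d → ℤ), ?_⟩
    funext j
    have hv0 : ((∑ i : Fin z, (Pi.single (e₀ i) (((x i).1.val : ℤ)) +
        Pi.single (e₁ i) (((x i).2.val : ℤ))) : Fin d → ℤ)) (e₀ j) = ((x j).1.val : ℤ) := by
      rw [Finset.sum_apply]
      rw [Finset.sum_eq_single j]
      · simp [Pi.single_apply, (he01 j j).symm]
      · intro t _ ht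
        rw [Pi.add_apply, Pi.single_apply, Pi.single_apply,
          if_neg (fun hh => ht (he0inj hh).symm), if_neg (he01 j t), add_zero]
      · exact fun h => absurd (Finset.mem_univ j) h
    have hv1 : ((∑ i : Fin z, (Pi.single (e₀ i) (((x i).1.val : ℤ)) +
        Pi.single (e₁ i) (((x i).2.val : ℤ))) : Fin d → ℤ)) (e₁ j) = ((x j).2.val : ℤ) := by
      rw [Finset.sum_apply]
      rw [Finset.sum_eq_single j]
      · simp [Pi.single_apply, he01 j j]
      · intro t _ ht
        rw [Pi.add_apply, Pi.single_apply, Pi.single_apply,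
          if_neg (fun hh => he01 t j hh.symm), if_neg (fun hh => ht (he1inj hh).symm), add_zero]
      · exact fun h => absurd (Finset.mem_univ j) h
    rw [hφ, hv0, hv1]
    refine Prod.ext ?_ ?_ <;>
      simp [ZMod.natCast_val, ZMod.cast_id]
  have e : ((Fin d → ℤ) ⧸ S) ≃+ Π i : Fin z, ZMod (k i) × ZMod (k i) :=
    hker ▸ QuotientAddGroup.quotientKerEquivOfSurjective φ hsurj
  refine ⟨S, ?_, hR, ⟨e⟩, ?_⟩
  · rw [hR]; rfl
  · rw [Nat.card_congr e.toEquiv, Nat.card_pi]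
    refine Finset.prod_congr rfl fun i _ => ?_
    rw [Nat.card_prod, Nat.card_zmod, sq]
end

section
/- For every finite dimensional module U over the Lie algebra g^x of polynomial vector fields spanned by {x^p d_u : p ∈ N^d, |p| ≥ 1, u ∈ C^d}, there exists an integer p ≫ 0 such that g^x_q U = 0 for all q ≥ p, where g^x_q = span{ x^m d_u : |m| = q+1 }. -/
/-!
The Euler field `E = ∑ᵢ xᵢ ∂ᵢ` grades `g^x`: `ad E` acts on `x^m d_u` by the scalar `|m| - 1`,
so `g^x_q` is the `q`-eigenspace of `ad E`. In a Lie module `U`, `ρ(⁅E, x⁆) = ⁅ρ E, ρ x⁆`, hence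
`ρ` maps this eigenspace into the `q`-eigenspace of `ad (ρ E)` on `End U`. When `U` is finite
dimensional, `ad (ρ E)` has only finitely many eigenvalues, so these eigenspaces vanish for `q ≫ 0`.
-/

namespace LieModule

attribute [local instance] LieRing.ofAssociativeRing

variable {K L M : Type*} [Field K] [LieRing L] [LieAlgebra K L]
  [AddCommGroup M] [Module K M] [LieRingModule L M] [LieModule K L M]

theorem hasEigenvalue_ad_toEnd_of_lie_eq_smul {E x : L} {c : K} (h : ⁅E, x⁆ = c • x)
    (hx : toEnd K L M x ≠ 0) :
    Module.End.HasEigenvalue (LieAlgebra.ad K (Module.End K M) (toEnd K L M E)) c := by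
  refine Module.End.hasEigenvalue_of_hasEigenvector ⟨Module.End.mem_eigenspace_iff.mpr ?_, hx⟩
  rw [LieAlgebra.ad_apply, ← LieHom.map_lie, h, map_smul]

theorem exists_toEnd_eq_zero_of_lie_eq_natCast_smul [CharZero K] [FiniteDimensional K M] (E : L) :
    ∃ N : ℕ, ∀ q ≥ N, ∀ x : L, ⁅E, x⁆ = (q : K) • x → toEnd K L M x = 0 := by
  set Φ := LieAlgebra.ad K (Module.End K M) (toEnd K L M E)
  have hfin : {q : ℕ | Φ.HasEigenvalue (q : K)}.Finite :=
    (Module.End.finite_hasEigenvalue Φ).preimage Nat.cast_injective.injOn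
  obtain ⟨N, hN⟩ := hfin.bddAbove
  refine ⟨N + 1, fun q hq x h => ?_⟩
  by_contra hx
  have := hN (hasEigenvalue_ad_toEnd_of_lie_eq_smul h hx)
  omega

end LieModule

section PolynomialVectorFields

variable {R L : Type*} [CommRing R] [LieRing L] [LieAlgebra R L] {d : ℕ}
  (Dx : (Fin d → ℕ) → (Fin d → R) → L)

/-- The Euler field `∑ᵢ xᵢ ∂ᵢ`, with `x^m d_u` encoded as `Dx m u`. -/
def eulerVectorField : L := ∑ i, Dx (Pi.single i 1) (Pi.single i 1)

variable {Dx}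
variable (hbr : ∀ (p p' : Fin d → ℕ) (u v : Fin d → R),
      ⁅Dx p u, Dx p' v⁆
        = ∑ i, (u i * (p' i : R)) • Dx (p + p' - Pi.single i 1) v
          - ∑ i, (v i * (p i : R)) • Dx (p + p' - Pi.single i 1) u)
include hbr

theorem lie_single_single_left (k : Fin d) (m : Fin d → ℕ) (w : Fin d → R) :
    ⁅Dx (Pi.single k 1) (Pi.single k 1), Dx m w⁆
      = (m k : R) • Dx m w - w k • Dx m (Pi.single k 1) := by
  have hsub : Pi.single k 1 + m - Pi.single k 1 = m := by
    funext j; simp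
  have hoff (c : Fin d → R) (u : Fin d → R) (hc : ∀ i, i ≠ k → c i = 0) :
      ∑ i, c i • Dx (Pi.single k 1 + m - Pi.single i 1) u = c k • Dx m u := by
    rw [Finset.sum_eq_single k (fun i _ hik => by simp [hc i hik]) (by simp), hsub]
  rw [hbr, hoff _ _ (fun i hi => by simp [hi]), hoff _ _ (fun i hi => by simp [hi])]
  simp

theorem lie_eulerVectorField (hlin : ∀ p, IsLinearMap R (Dx p)) (m : Fin d → ℕ)
    (w : Fin d → R) :
    ⁅eulerVectorField Dx, Dx m w⁆ = ((∑ j, (m j : R)) - 1) • Dx m w := by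
  let f : (Fin d → R) →ₗ[R] L := IsLinearMap.mk' (Dx m) (hlin m)
  have hw : ∑ k, w k • Dx m (Pi.single k 1) = Dx m w := by
    change ∑ k, w k • f (Pi.single k 1) = f w
    simp only [← map_smul, ← map_sum]
    congr 1
    ext j
    simp [Pi.single_apply]
  rw [eulerVectorField, sum_lie]
  simp only [lie_single_single_left hbr, Finset.sum_sub_distrib, ← Finset.sum_smul, hw,
    sub_smul, one_smul]

end PolynomialVectorFields

theorem stmt13_general {d : ℕ} {L : Type*} [LieRing L] [LieAlgebra ℂ L]
    (Dx : (Fin d → ℕ) → (Fin d → ℂ) → L)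
    (hlin : ∀ p, IsLinearMap ℂ (Dx p))
    (hbr : ∀ (p p' : Fin d → ℕ) (u v : Fin d → ℂ),
      ⁅Dx p u, Dx p' v⁆
        = ∑ i, (u i * (p' i : ℂ)) • Dx (p + p' - Pi.single i 1) v
          - ∑ i, (v i * (p i : ℂ)) • Dx (p + p' - Pi.single i 1) u)
    (G : ℕ → Submodule ℂ L)
    (hG : ∀ i, G i = Submodule.span ℂ
      {x : L | ∃ p u, (∑ j, p j) = i + 1 ∧ x = Dx p u})
    (U : Type*) [AddCommGroup U] [Module ℂ U]
    [LieRingModule L U] [LieModule ℂ L U] [FiniteDimensional ℂ U] :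
    ∃ p : ℕ, ∀ q ≥ p, ∀ x ∈ G q, ∀ v : U, ⁅x, v⁆ = 0 := by
  obtain ⟨N, hN⟩ :=
    LieModule.exists_toEnd_eq_zero_of_lie_eq_natCast_smul (K := ℂ) (M := U) (eulerVectorField Dx)
  refine ⟨N, fun q hq x hx v => ?_⟩
  suffices G q ≤ LinearMap.ker (LieModule.toEnd ℂ L U : L →ₗ[ℂ] Module.End ℂ U) from
    LinearMap.congr_fun (this hx) v
  rw [hG, Submodule.span_le]
  rintro _ ⟨m, w, hm, rfl⟩
  refine hN q hq _ ?_
  rw [lie_eulerVectorField hbr hlin, ← Nat.cast_sum, hm]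
  push_cast
  ring_nf

/-- every finite dimensional module `U` over the Lie algebra `g^x`
of polynomial vector fields (spanned by `x^p d_u`, `|p| ≥ 1`) is annihilated by
`g^x_q = span{x^m d_u : |m| = q+1}` for all sufficiently large `q`. -/
theorem stmt13 {d : ℕ} {L : Type*} [LieRing L] [LieAlgebra ℂ L]
    (Dx : (Fin d → ℕ) → (Fin d → ℂ) → L)
    (hlin : ∀ p, IsLinearMap ℂ (Dx p))
    (hzero : ∀ u, Dx 0 u = 0)
    (hbr : ∀ (p p' : Fin d → ℕ) (u v : Fin d → ℂ),
      ⁅Dx p u, Dx p' v⁆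
        = ∑ i, (u i * (p' i : ℂ)) • Dx (p + p' - Pi.single i 1) v
          - ∑ i, (v i * (p i : ℂ)) • Dx (p + p' - Pi.single i 1) u)
    (hspan : Submodule.span ℂ {x : L | ∃ p u, x = Dx p u} = ⊤)
    (G : ℕ → Submodule ℂ L)
    (hG : ∀ i, G i = Submodule.span ℂ
      {x : L | ∃ p u, (∑ j, p j) = i + 1 ∧ x = Dx p u})
    (U : Type*) [AddCommGroup U] [Module ℂ U]
    [LieRingModule L U] [LieModule ℂ L U] [FiniteDimensional ℂ U] :
    ∃ p : ℕ, ∀ q ≥ p, ∀ x ∈ G q, ∀ v : U, ⁅x, v⁆ = 0 :=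
  stmt13_general Dx hlin hbr G hG U
end

section
/- Let A₁, A₂ be associative unital C-algebras with A₁ of countable dimension, and V an irreducible A₁⊗A₂-module. Then V ≅ V₁ ⊗ V₂ as A₁⊗A₂-modules, where V₁ is an irreducible A₁-submodule of V (restricting the action along A₁ ≅ A₁⊗1), and V₂ = Hom_{A₁}(V₁, V) is an irreducible A₂-module under (a·f)(v) = (1⊗a)(f(v)). -/
open scoped TensorProduct
open Cardinal

universe u v w

/-!
By Dixmier's lemma, `End_{A₁} V₁ = ℂ`: a non-scalar endomorphism `φ` would lie in a subfield of
the division ring `End_{A₁} V₁` in which it is transcendental over `ℂ`, and the resolvents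
`(φ - c)⁻¹`, `c ∈ ℂ`, would be uncountably many linearly independent elements, while
`End_{A₁} V₁` embeds into `V₁` (via `ψ ↦ ψ v₀`), which has countable dimension.
With scalar endomorphisms, the Jacobson density theorem makes evaluation
`V₁ ⊗ Hom_{A₁}(V₁, V) → V` injective. For any nonzero `A₂`-submodule `N` of `Hom_{A₁}(V₁, V)`
the image of `V₁ ⊗ N` is stable under `A₁` and `A₂`, hence is all of `V`; for `N = ⊤` this is
surjectivity, and in general, `V₁` being faithfully flat over `ℂ`, it forces `N = ⊤`.
-/

theorem IsAlgClosed.algebraMap_surjective_of_lift_rank_lt {k : Type u} {K : Type v} [Field k]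
    [IsAlgClosed k] [Field K] [Algebra k K]
    (h : Cardinal.lift.{u} (Module.rank k K) < Cardinal.lift.{v} #k) :
    Function.Surjective (algebraMap k K) :=
  have : Algebra.IsAlgebraic k K := ⟨fun _ ↦ by_contra fun hx ↦
    h.not_ge (Transcendental.linearIndependent_sub_inv hx).cardinal_lift_le_rank⟩
  IsAlgClosed.algebraMap_bijective_of_isIntegral.2

theorem DivisionRing.algebraMap_surjective_of_lift_rank_lt {k : Type u} {D : Type v} [Field k]
    [IsAlgClosed k] [DivisionRing D] [Algebra k D]
    (h : Cardinal.lift.{u} (Module.rank k D) < Cardinal.lift.{v} #k) :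
    Function.Surjective (algebraMap k D) := by
  intro x
  -- the double centralizer of `x` is commutative and closed under inverses
  let L := Subalgebra.centralizer k (Set.centralizer {x})
  have hxL : x ∈ L := Set.subset_centralizer_centralizer rfl
  have hL : IsField L :=
    { exists_pair_ne := ⟨0, 1, zero_ne_one⟩
      mul_comm := fun a b ↦ Subtype.ext <|
        Set.centralizer_centralizer_comm_of_comm (by simp) _ a.2 _ b.2
      mul_inv_cancel := fun {a} ha ↦ ⟨⟨a⁻¹, Set.inv_mem_centralizer₀ a.2⟩,
        Subtype.ext <| mul_inv_cancel₀ fun h ↦ ha (Subtype.ext h)⟩ }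
  let _ := hL.toField
  have hrank : Cardinal.lift.{u} (Module.rank k L) < Cardinal.lift.{v} #k :=
    (Cardinal.lift_le.2 (Submodule.rank_le (Subalgebra.toSubmodule L))).trans_lt h
  obtain ⟨c, hc⟩ := IsAlgClosed.algebraMap_surjective_of_lift_rank_lt hrank ⟨x, hxL⟩
  exact ⟨c, congrArg Subtype.val hc⟩

theorem IsSemisimpleModule.exists_smul_eq_of_linearIndependent {k A M : Type*} [Field k] [Ring A]
    [AddCommGroup M] [Module k M] [Module A M] [IsSemisimpleModule A M]
    (hEnd : ∀ f : M →ₗ[A] M, ∃ c : k, ∀ m, f m = c • m)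
    {ι : Type*} {v : ι → M} (hv : LinearIndependent k v) (w : ι → M) (s : Finset ι) :
    ∃ a : A, ∀ i ∈ s, a • v i = w i := by
  classical
  obtain ⟨g, hg⟩ := LinearMap.exists_extend ((Module.Basis.span hv).constr k w)
  have hgv (i : ι) : g (v i) = w i := by
    rw [← (Module.Basis.span hv).constr_basis k w i, ← hg, LinearMap.comp_apply,
      Module.Basis.span_apply, Submodule.subtype_apply]
  -- `g` commutes with all `A`-endomorphisms since these are scalars
  let G : Module.End (Module.End A M) M :=
    { g.toAddMonoidHom with
      map_smul' := fun f m ↦ by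
        obtain ⟨c, hc⟩ := hEnd f
        simp [Module.End.smul_def, hc] }
  obtain ⟨a, ha⟩ := jacobson_density G (s.image v)
  exact ⟨a, fun i hi ↦ (ha _ (Finset.mem_image_of_mem v hi)).symm.trans (hgv i)⟩

namespace IsSimpleModule

variable {k : Type u} {A : Type v} {M : Type w} [Field k] [Ring A] [Algebra k A]
  [AddCommGroup M] [Module k M] [Module A M] [IsScalarTower k A M] [IsSimpleModule A M]

theorem lift_rank_le_lift_rank :
    Cardinal.lift.{v} (Module.rank k M) ≤ Cardinal.lift.{w} (Module.rank k A) := by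
  have := IsSimpleModule.nontrivial A M
  obtain ⟨m, hm⟩ := exists_ne (0 : M)
  exact LinearMap.lift_rank_le_of_surjective ((LinearMap.toSpanSingleton A M m).restrictScalars k)
    (toSpanSingleton_surjective A hm)

theorem exists_eq_smul_of_lift_rank_lt [IsAlgClosed k]
    (h : Cardinal.lift.{u} (Module.rank k M) < Cardinal.lift.{w} #k) (f : M →ₗ[A] M) :
    ∃ c : k, ∀ m, f m = c • m := by
  classical
  have := IsSimpleModule.nontrivial A M
  obtain ⟨m₀, hm₀⟩ := exists_ne (0 : M)
  let eval : Module.End A M →ₗ[k] M :=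
    { toFun := fun g ↦ g m₀, map_add' := fun _ _ ↦ rfl, map_smul' := fun _ _ ↦ rfl }
  have heval : Function.Injective eval := by
    refine (injective_iff_map_eq_zero eval).2 fun g hg ↦ ?_
    refine (LinearMap.injective_or_eq_zero g).resolve_left fun hinj ↦ hm₀ (hinj ?_)
    rwa [map_zero]
  have hD : Cardinal.lift.{u} (Module.rank k (Module.End A M)) < Cardinal.lift.{w} #k :=
    (Cardinal.lift_le.2 (LinearMap.rank_le_of_injective eval heval)).trans_lt h
  obtain ⟨c, rfl⟩ := DivisionRing.algebraMap_surjective_of_lift_rank_lt hD f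
  exact ⟨c, fun m ↦ Module.algebraMap_end_apply k A M c m⟩

end IsSimpleModule

section Evaluation

variable {k A M V : Type*} [Field k] [Ring A] [Algebra k A]
  [AddCommGroup M] [Module k M] [Module A M] [IsScalarTower k A M]
  [AddCommGroup V] [Module k V] [Module A V] [IsScalarTower k A V]

variable (k A M V) in
def evalTensor : M ⊗[k] (M →ₗ[A] V) →ₗ[k] V :=
  TensorProduct.lift (LinearMap.restrictScalarsₗ k A M V k).flip

@[simp]
theorem evalTensor_tmul (m : M) (f : M →ₗ[A] V) : evalTensor k A M V (m ⊗ₜ f) = f m :=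
  rfl

theorem evalTensor_injective [IsSimpleModule A M]
    (hEnd : ∀ f : M →ₗ[A] M, ∃ c : k, ∀ m, f m = c • m) :
    Function.Injective (evalTensor k A M V) := by
  classical
  let b := Module.Basis.ofVectorSpace k M
  refine (injective_iff_map_eq_zero _).2 fun x hx ↦ ?_
  obtain ⟨g, rfl⟩ := TensorProduct.eq_repr_basis_left b x
  suffices g = 0 by simp [this]
  ext j m
  obtain ⟨a, ha⟩ := IsSemisimpleModule.exists_smul_eq_of_linearIndependent hEnd
    b.linearIndependent (Pi.single j m) g.support
  calc g j m = ∑ i ∈ g.support, g i ((Pi.single j m : _ → M) i) := by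
        rw [Finset.sum_eq_single j (fun i _ hij ↦ by simp [hij])
          (fun hj ↦ by simp [Finsupp.notMem_support_iff.1 hj])]
        simp
    _ = ∑ i ∈ g.support, a • g i (b i) := Finset.sum_congr rfl fun i hi ↦ by
        rw [← ha i hi, map_smul]
    _ = a • evalTensor k A M V (g.sum fun i n ↦ b i ⊗ₜ n) := by
        simp [Finsupp.sum, Finset.smul_sum]
    _ = 0 := by rw [hx, smul_zero]

end Evaluation

theorem TensorProduct.map_mem_range_of_forall_tmul {R M N P : Type*} [CommRing R]
    [AddCommGroup M] [AddCommGroup N] [AddCommGroup P] [Module R M] [Module R N] [Module R P]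
    {F : M ⊗[R] N →ₗ[R] P} (T : P →+ P) (h : ∀ m n, T (F (m ⊗ₜ n)) ∈ LinearMap.range F)
    (x : M ⊗[R] N) : T (F x) ∈ LinearMap.range F := by
  induction x using TensorProduct.induction_on with
  | zero => simp
  | tmul m n => exact h m n
  | add x y hx hy => simpa using add_mem hx hy

section TensorProductAlgebra

variable {k A₁ A₂ V M : Type*} [Field k] [Ring A₁] [Ring A₂] [Algebra k A₁] [Algebra k A₂]
  [AddCommGroup V] [Module k V] [Module A₁ V] [Module A₂ V]
  [Module (A₁ ⊗[k] A₂) V] [IsSimpleModule (A₁ ⊗[k] A₂) V]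

theorem eq_bot_or_eq_top_of_smul_mem
    (hcompat : ∀ (a₁ : A₁) (a₂ : A₂) (v : V), (a₁ ⊗ₜ[k] a₂) • v = a₁ • a₂ • v)
    (W : Submodule k V) (h₁ : ∀ (a : A₁), ∀ v ∈ W, a • v ∈ W)
    (h₂ : ∀ (a : A₂), ∀ v ∈ W, a • v ∈ W) : W = ⊥ ∨ W = ⊤ := by
  let W' : Submodule (A₁ ⊗[k] A₂) V :=
    { W.toAddSubmonoid with
      smul_mem' := fun x v hv ↦ by
        induction x using TensorProduct.induction_on with
        | zero => simp
        | tmul a₁ a₂ => simpa [hcompat] using h₁ a₁ _ (h₂ a₂ v hv)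
        | add x y hx hy => simpa [add_smul] using add_mem hx hy }
  rcases eq_bot_or_eq_top W' with h | h
  · exact .inl (Submodule.ext fun v ↦ SetLike.ext_iff.1 h v)
  · exact .inr (Submodule.ext fun v ↦ SetLike.ext_iff.1 h v)

variable [IsScalarTower k A₁ V] [IsScalarTower k A₂ V] [SMulCommClass A₁ A₂ V]
  [AddCommGroup M] [Module k M] [Module A₁ M] [IsScalarTower k A₁ M]

theorem range_evalTensor_comp_lTensor_eq_top
    (hcompat : ∀ (a₁ : A₁) (a₂ : A₂) (v : V), (a₁ ⊗ₜ[k] a₂) • v = a₁ • a₂ • v)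
    {N : Submodule A₂ (M →ₗ[A₁] V)} (hN : N ≠ ⊥) :
    LinearMap.range (evalTensor k A₁ M V ∘ₗ (N.restrictScalars k).subtype.lTensor M) = ⊤ := by
  refine (eq_bot_or_eq_top_of_smul_mem hcompat _ ?_ ?_).resolve_left ?_
  · rintro a _ ⟨x, rfl⟩
    exact TensorProduct.map_mem_range_of_forall_tmul (DistribSMul.toAddMonoidHom V a)
      (fun m f ↦ ⟨(a • m) ⊗ₜ f, by simp⟩) x
  · rintro a _ ⟨x, rfl⟩
    exact TensorProduct.map_mem_range_of_forall_tmul (DistribSMul.toAddMonoidHom V a)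
      (fun m f ↦ ⟨m ⊗ₜ ⟨a • f, N.smul_mem a f.2⟩, by simp⟩) x
  · obtain ⟨f, hfN, hf⟩ := Submodule.exists_mem_ne_zero_of_ne_bot hN
    obtain ⟨m, hm⟩ := DFunLike.ne_iff.1 hf
    exact (Submodule.ne_bot_iff _).2 ⟨f m, ⟨m ⊗ₜ ⟨f, hfN⟩, rfl⟩, hm⟩

theorem evalTensor_surjective [Nontrivial (M →ₗ[A₁] V)]
    (hcompat : ∀ (a₁ : A₁) (a₂ : A₂) (v : V), (a₁ ⊗ₜ[k] a₂) • v = a₁ • a₂ • v) :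
    Function.Surjective (evalTensor k A₁ M V) :=
  LinearMap.range_eq_top.1 <| top_le_iff.1 <|
    (range_evalTensor_comp_lTensor_eq_top hcompat (N := ⊤) bot_ne_top.symm).ge.trans
      (LinearMap.range_comp_le_range _ _)

theorem isSimpleModule_linearMap [IsSimpleModule A₁ M] [Nontrivial (M →ₗ[A₁] V)]
    (hcompat : ∀ (a₁ : A₁) (a₂ : A₂) (v : V), (a₁ ⊗ₜ[k] a₂) • v = a₁ • a₂ • v)
    (hEnd : ∀ f : M →ₗ[A₁] M, ∃ c : k, ∀ m, f m = c • m) :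
    IsSimpleModule A₂ (M →ₗ[A₁] V) := by
  have := IsSimpleModule.nontrivial A₁ M
  refine (isSimpleModule_iff _ _).2 ⟨fun N ↦ or_iff_not_imp_left.2 fun hN ↦ ?_⟩
  have hsurj := LinearMap.range_eq_top.1 (range_evalTensor_comp_lTensor_eq_top hcompat hN)
  rw [LinearMap.coe_comp] at hsurj
  have hincl : Function.Surjective (N.restrictScalars k).subtype :=
    (Module.FaithfullyFlat.lTensor_surjective_iff_surjective _ _ _).1
      (hsurj.of_comp_left (evalTensor_injective hEnd))
  exact eq_top_iff.2 fun f _ ↦ by obtain ⟨g, rfl⟩ := hincl f; exact g.2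

end TensorProductAlgebra

theorem stmt15_general (A₁ A₂ : Type*) [Ring A₁] [Ring A₂] [Algebra ℂ A₁] [Algebra ℂ A₂]
    (V : Type*) [AddCommGroup V] [Module ℂ V]
    [Module A₁ V] [Module A₂ V]
    [IsScalarTower ℂ A₁ V] [IsScalarTower ℂ A₂ V]
    [SMulCommClass A₁ A₂ V]
    [Module (A₁ ⊗[ℂ] A₂) V]
    (hcompat : ∀ (a₁ : A₁) (a₂ : A₂) (v : V), (a₁ ⊗ₜ[ℂ] a₂) • v = a₁ • a₂ • v)
    (hcount : ∃ s : Set A₁, s.Countable ∧ Submodule.span ℂ s = ⊤)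
    [IsSimpleModule (A₁ ⊗[ℂ] A₂) V]
    (V₁ : Submodule A₁ V) [IsSimpleModule A₁ V₁] :
    IsSimpleModule A₂ (V₁ →ₗ[A₁] V) ∧
    ∃ φ : V₁ ⊗[ℂ] (V₁ →ₗ[A₁] V) ≃ₗ[ℂ] V,
      (∀ (v : V₁) (f : V₁ →ₗ[A₁] V), φ (v ⊗ₜ f) = f v) ∧
      (∀ (a₁ : A₁) (a₂ : A₂) (v : V₁) (f : V₁ →ₗ[A₁] V),
        φ ((a₁ • v) ⊗ₜ (a₂ • f)) = (a₁ ⊗ₜ[ℂ] a₂) • φ (v ⊗ₜ f)) := by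
  obtain ⟨s, hs, hspan⟩ := hcount
  have hA₁ : Module.rank ℂ A₁ ≤ ℵ₀ := by
    rw [← rank_top, ← hspan]
    exact (rank_span_le s).trans hs.le_aleph0
  have hV₁ : Module.rank ℂ V₁ ≤ ℵ₀ := Cardinal.lift_le_aleph0.1 <|
    (IsSimpleModule.lift_rank_le_lift_rank (A := A₁)).trans (Cardinal.lift_le_aleph0.2 hA₁)
  have hEnd := IsSimpleModule.exists_eq_smul_of_lift_rank_lt (k := ℂ) (A := A₁) (M := V₁)
    (by simpa [Cardinal.mk_complex] using hV₁.trans_lt aleph0_lt_continuum)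
  have := IsSimpleModule.nontrivial A₁ V₁
  have : Nontrivial (V₁ →ₗ[A₁] V) := ⟨⟨_, _, LinearMap.ne_zero_of_injective V₁.injective_subtype⟩⟩
  refine ⟨isSimpleModule_linearMap hcompat hEnd, .ofBijective (evalTensor ℂ A₁ V₁ V)
    ⟨evalTensor_injective hEnd, evalTensor_surjective hcompat⟩, fun _ _ ↦ rfl, fun a₁ a₂ v f ↦ ?_⟩
  change evalTensor ℂ A₁ V₁ V _ = _ • evalTensor ℂ A₁ V₁ V _
  rw [evalTensor_tmul, evalTensor_tmul, hcompat, LinearMap.smul_apply, map_smul, smul_comm a₁ a₂]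

/-- if `A₁, A₂` are unital associative `ℂ`-algebras with `A₁` of
countable dimension and `V` an irreducible `A₁ ⊗ A₂`-module (the two factors
acting commutingly via `(a₁ ⊗ a₂) • v = a₁ • a₂ • v`), then for any irreducible
`A₁`-submodule `V₁` of `V`, the space `V₂ = Hom_{A₁}(V₁, V)` (with `A₂`-action
`(a·f)(v) = a • f v`) is an irreducible `A₂`-module and evaluation gives an
isomorphism `V₁ ⊗ V₂ ≅ V` (of `A₁ ⊗ A₂`-modules). -/
theorem stmt15 (A₁ A₂ : Type*) [Ring A₁] [Ring A₂] [Algebra ℂ A₁] [Algebra ℂ A₂]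
    (V : Type*) [AddCommGroup V] [Module ℂ V]
    [Module A₁ V] [Module A₂ V]
    [IsScalarTower ℂ A₁ V] [IsScalarTower ℂ A₂ V]
    [SMulCommClass A₁ A₂ V] [SMulCommClass A₂ A₁ V]
    [Module (A₁ ⊗[ℂ] A₂) V]
    (hcompat : ∀ (a₁ : A₁) (a₂ : A₂) (v : V), (a₁ ⊗ₜ[ℂ] a₂) • v = a₁ • a₂ • v)
    (hcount : ∃ s : Set A₁, s.Countable ∧ Submodule.span ℂ s = ⊤)
    [IsSimpleModule (A₁ ⊗[ℂ] A₂) V]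
    (V₁ : Submodule A₁ V) [IsSimpleModule A₁ V₁] :
    IsSimpleModule A₂ (V₁ →ₗ[A₁] V) ∧
    ∃ φ : V₁ ⊗[ℂ] (V₁ →ₗ[A₁] V) ≃ₗ[ℂ] V,
      (∀ (v : V₁) (f : V₁ →ₗ[A₁] V), φ (v ⊗ₜ f) = f v) ∧
      (∀ (a₁ : A₁) (a₂ : A₂) (v : V₁) (f : V₁ →ₗ[A₁] V),
        φ ((a₁ • v) ⊗ₜ (a₂ • f)) = (a₁ ⊗ₜ[ℂ] a₂) • φ (v ⊗ₜ f)) :=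
  stmt15_general A₁ A₂ V hcompat hcount V₁
end

section
/- In the tensor field module F^α(V,W) over D ⋉ Z (Z the center of C_Q acting by t^n·(v⊗w⊗t^s) = v⊗w⊗t^{n+s} for n ∈ R), if V is an irreducible gl_d-module and W an irreducible Γ-graded gl_N-module, then F^α(V,W) is an irreducible (D ⋉ Z)-module with all weight spaces (for the Cartan span{D(u,0)}) of dimension at most dim V · dim W, i.e. it is a cuspidal module. -/
open Matrix
open scoped TensorProduct

attribute [local instance 100] LieRing.ofAssociativeRing

noncomputable def Xdiag (k : ℕ) (q : ℂ) : Matrix (Fin k) (Fin k) ℂ :=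
  Matrix.diagonal fun a => q ^ (a : ℕ)

def Yshift (k : ℕ) : Matrix (Fin k) (Fin k) ℂ :=
  Matrix.of fun a b => if (b : ℕ) = ((a : ℕ) + 1) % k then 1 else 0

noncomputable def zpowM {n : Type*} [Fintype n] [DecidableEq n]
    (M : Matrix n n ℂ) (ord : ℕ) (e : ℤ) : Matrix n n ℂ :=
  M ^ (e % (ord : ℤ)).toNat

/-- The matrix `X^n = ⊗ᵢ X_{2i-1}^{n_{2i-1}} X_{2i}^{n_{2i}} ∈ M_N(ℂ)`. -/
noncomputable def Xbig {d z : ℕ} (k : Fin z → ℕ) (qi : Fin z → ℂ)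
    (e₀ e₁ : Fin z → Fin d) (n : Fin d → ℤ) :
    Matrix (Π i, Fin (k i)) (Π i, Fin (k i)) ℂ :=
  Matrix.of fun a b => ∏ i : Fin z,
    (zpowM (Xdiag (k i) (qi i)) (k i) (n (e₀ i))
      * zpowM (Yshift (k i)) (k i) (n (e₁ i))) (a i) (b i)

/-!
The weights `(u | α + s)` of the operators `D(u, 0)` separate the degrees `s`, so a submodule `U`
stable under them is the sum of its components `U_s ⊆ V ⊗ W`, and a weight space lies in a single
`V ⊗ W ⊗ t^s`. On a component, `D(u, m) - (u | α + s) t^m` followed by `t^{-m}` acts as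
`θ(m uᵀ) ⊗ 1`; for `m` in the radical these span `gl_d ⊗ 1`, so by Burnside's theorem `U_s` is
stable under `End V ⊗ 1` and `U_s = V ⊗ Y_s` with `Y_s = {w | v₁ ⊗ w ∈ U_s}`. On the radical
`X^n = 1`, so `ψ(1)` commutes with every `ψ(X^n)` and is a scalar by the graded Schur lemma. Hence
`⨆ₛ Y_s` is a graded `ψ(X^n)`-stable subspace of `W`, thus `0` or `W`, and independence of the
grading gives `Y_s = W_{s̄}`.
-/

open Module

section Lattice

variable {α ι : Type*} [CompleteLattice α] [IsModularLattice α]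

theorem iSupIndep.inf_iSup_of_le {f g : ι → α} (hf : iSupIndep f) (hgf : ∀ i, g i ≤ f i)
    (i : ι) : f i ⊓ ⨆ j, g j = g i := by
  have hrest : (⨆ (j) (_ : j ≠ i), g j) ⊓ f i = ⊥ :=
    disjoint_iff.mp ((hf i).symm.mono_left (iSup₂_mono fun j _ => hgf j))
  rw [iSup_split_single g i, inf_comm, sup_inf_assoc_of_le _ (hgf i), hrest, sup_bot_eq]

end Lattice

section Graded

variable {K W Γ ι : Type*} [Field K] [AddCommGroup W] [Module K W] {Wg : Γ → Submodule K W}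

theorem iSupIndep.ker_eq_iSup_inf (hind : iSupIndep Wg) (htop : ⨆ γ, Wg γ = ⊤)
    (g : End K W) (hg : ∀ γ, ∀ w ∈ Wg γ, g w ∈ Wg γ) :
    LinearMap.ker g = ⨆ γ, LinearMap.ker g ⊓ Wg γ := by
  refine le_antisymm (fun x hx => ?_) (iSup_le fun γ => inf_le_left)
  obtain ⟨f, hf, rfl⟩ :=
    (Submodule.mem_iSup_iff_exists_finsupp Wg x).mp (htop ▸ Submodule.mem_top)
  have hgf : ∀ γ ∈ f.support, g (f γ) = 0 :=
    (iSupIndep_iff_finsetSum_eq_zero_imp_eq_zero Wg).mp hind f.support (fun γ => g (f γ))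
      (fun γ _ => hg γ _ (hf γ)) (by simpa [Finsupp.sum, map_sum] using hx)
  exact Submodule.sum_mem _ fun γ hγ =>
    Submodule.mem_iSup_of_mem γ ⟨LinearMap.mem_ker.mpr (hgf γ hγ), hf γ⟩

theorem exists_eq_smul_one_of_graded_irreducible [IsAlgClosed K] [FiniteDimensional K W]
    [Nontrivial W] (hind : iSupIndep Wg) (htop : ⨆ γ, Wg γ = ⊤) (T : ι → End K W)
    (hirr : ∀ U : Submodule K W, (∀ i, ∀ w ∈ U, T i w ∈ U) →
      U = ⨆ γ, U ⊓ Wg γ → U = ⊥ ∨ U = ⊤)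
    (f : End K W) (hf : ∀ γ, ∀ w ∈ Wg γ, f w ∈ Wg γ) (hcomm : ∀ i, Commute f (T i)) :
    ∃ μ : K, f = μ • 1 := by
  obtain ⟨μ, hμ⟩ := Module.End.exists_eigenvalue f
  refine ⟨μ, sub_eq_zero.mp (LinearMap.ker_eq_top.mp ?_)⟩
  have hgraded : ∀ γ, ∀ w ∈ Wg γ, (f - μ • 1) w ∈ Wg γ := fun γ w hw =>
    (Wg γ).sub_mem (hf γ w hw) ((Wg γ).smul_mem μ hw)
  refine (hirr _ (fun i w hw => ?_) (hind.ker_eq_iSup_inf htop _ hgraded)).resolve_left ?_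
  · rw [LinearMap.mem_ker] at hw ⊢
    rw [← Module.End.mul_apply, ((hcomm i).sub_left ((Commute.one_left _).smul_left μ)).eq,
      Module.End.mul_apply, hw, map_zero]
  · obtain ⟨v, hv⟩ := hμ.exists_hasEigenvector
    exact (Submodule.ne_bot_iff _).mpr ⟨v, by simp [hv.apply_eq_smul], hv.2⟩

end Graded

section QuotientGraded

variable {K W G : Type*} [Field K] [AddCommGroup W] [Module K W] [AddCommGroup G]
  {S : AddSubgroup G} {Wg : G ⧸ S → Submodule K W} {T : G → End K W}

theorem eq_bot_or_eq_of_shift_invariant [IsAlgClosed K] [FiniteDimensional K W] [Nontrivial W]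
    (hind : iSupIndep Wg) (htop : ⨆ γ, Wg γ = ⊤)
    (hT : ∀ (n : G) γ, ∀ w ∈ Wg γ, T n w ∈ Wg (n + γ))
    (hcomm : ∀ n ∈ S, ∀ r, Commute (T n) (T r))
    (hirr : ∀ U : Submodule K W, (∀ n, ∀ w ∈ U, T n w ∈ U) →
      U = ⨆ γ, U ⊓ Wg γ → U = ⊥ ∨ U = ⊤)
    (Y : G → Submodule K W) (hYle : ∀ s : G, Y s ≤ Wg s) (hYS : ∀ n ∈ S, ∀ s, Y s ≤ Y (n + s))
    (hYT : ∀ r ∉ S, ∀ s, ∀ w ∈ Y s, T r w ∈ Y (r + s)) :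
    (∀ s, Y s = ⊥) ∨ ∀ s : G, Y s = Wg s := by
  have hscalar : ∀ n ∈ S, ∃ μ : K, T n = μ • 1 := fun n hn =>
    exists_eq_smul_one_of_graded_irreducible hind htop T hirr (T n)
      (fun γ w hw => by simpa [(QuotientAddGroup.eq_zero_iff n).mpr hn] using hT n γ w hw)
      (hcomm n hn)
  have hTsup : ∀ r s, ∀ w ∈ Y s, T r w ∈ ⨆ t, Y t := by
    intro r s w hw
    by_cases hr : r ∈ S
    · obtain ⟨μ, hμ⟩ := hscalar r hr
      rw [hμ]
      exact Submodule.mem_iSup_of_mem s ((Y s).smul_mem μ hw)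
    · exact Submodule.mem_iSup_of_mem _ (hYT r hr s w hw)
  -- `Y` is constant on cosets of `S`; `Y'` is the induced family on the quotient
  let Y' : G ⧸ S → Submodule K W := fun γ => ⨆ (t : G) (_ : (t : G ⧸ S) = γ), Y t
  have hY' : ∀ s : G, Y' s = Y s := by
    refine fun s => le_antisymm (iSup₂_le fun t ht => ?_) (le_iSup₂_of_le s rfl le_rfl)
    simpa using hYS (-t + s) (QuotientAddGroup.eq.mp ht) t
  have hsup : ⨆ γ, Y' γ = ⨆ t, Y t := by
    rw [iSup_comm]
    simp only [iSup_iSup_eq_right]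
  have hsupY : (⨆ t, Y t) = ⊥ ∨ (⨆ t, Y t) = ⊤ := by
    refine hirr _ (fun r w hw => ?_) (le_antisymm ?_ (iSup_le fun γ => inf_le_left))
    · refine Submodule.iSup_induction Y (motive := fun w => T r w ∈ ⨆ t, Y t) hw
        (hTsup r) (by simp) fun a b ha hb => ?_
      rw [map_add]
      exact Submodule.add_mem _ ha hb
    · exact iSup_le fun s => le_iSup_of_le (s : G ⧸ S) (le_inf (le_iSup Y s) (hYle s))
  rcases hsupY with h | h
  · exact Or.inl fun s => eq_bot_iff.mpr (h ▸ le_iSup Y s)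
  · refine Or.inr fun s => ?_
    have := hind.inf_iSup_of_le (g := Y') (fun γ => iSup₂_le fun t ht => ht ▸ hYle t) s
    rwa [hsup, h, inf_top_eq, hY', eq_comm] at this

end QuotientGraded

section Diagonal

variable {K ι κ N : Type*} [Field K] [AddCommGroup N] [Module K N]
  {D : κ → End K (ι →₀ N)} {c : κ → ι → K}

theorem Finsupp.single_apply_mem_of_diagonal (hD : ∀ a x i, D a x i = c a i • x i)
    (hc : Pairwise fun i j => ∃ a, c a i ≠ c a j) {U : Submodule K (ι →₀ N)}
    (hU : ∀ a, ∀ x ∈ U, D a x ∈ U) {x : ι →₀ N} (hx : x ∈ U) (i : ι) :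
    Finsupp.single i (x i) ∈ U := by
  classical
  induction hs : x.support using Finset.strongInduction generalizing x with
  | H s ih =>
    by_cases hsub : x.support ⊆ {i}
    · rwa [← Finsupp.support_subset_singleton.mp hsub]
    obtain ⟨j, hjx, hji⟩ : ∃ j ∈ x.support, j ≠ i := by
      simpa [Finset.subset_iff] using hsub
    obtain ⟨a, ha⟩ := hc hji.symm
    -- `D a - c a j` kills the `j`-component and rescales the others
    set y := D a x - c a j • x with hy
    have hyapply : ∀ t, y t = (c a t - c a j) • x t := fun t => by simp [hy, hD, sub_smul]
    have hyU : y ∈ U := U.sub_mem (hU a x hx) (U.smul_mem _ hx)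
    have hys : y.support ⊂ s := by
      rw [← hs, Finset.ssubset_iff_of_subset fun t ht => ?_]
      · exact ⟨j, hjx, by simp [hyapply]⟩
      simp only [Finsupp.mem_support_iff, hyapply] at ht ⊢
      exact right_ne_zero_of_smul ht
    have := U.smul_mem (c a i - c a j)⁻¹ (ih _ hys hyU rfl)
    rwa [hyapply, Finsupp.smul_single, smul_smul, inv_mul_cancel₀ (sub_ne_zero.mpr ha),
      one_smul] at this

theorem Finsupp.iInf_eigenspace_le_range_lsingle (hD : ∀ a x i, D a x i = c a i • x i)
    (hc : Pairwise fun i j => ∃ a, c a i ≠ c a j) (i : ι) :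
    ⨅ a, (D a).eigenspace (c a i) ≤ LinearMap.range (Finsupp.lsingle i) := by
  intro x hx
  refine ⟨x i, Finsupp.ext fun t => ?_⟩
  obtain rfl | hti := eq_or_ne i t
  · simp
  obtain ⟨a, ha⟩ := hc hti.symm
  have hxa := congr($((Module.End.mem_eigenspace_iff).mp (Submodule.mem_iInf _ |>.mp hx a)) t)
  rw [hD, Finsupp.smul_apply] at hxa
  have hsmul : (c a t - c a i) • x t = 0 := by rw [sub_smul, hxa, sub_self]
  simp [hti, (smul_eq_zero.mp hsmul).resolve_left (sub_ne_zero.mpr ha)]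

end Diagonal

section Tensor

variable {K V W : Type*} [Field K] [AddCommGroup V] [Module K V] [AddCommGroup W] [Module K W]

theorem TensorProduct.tmul_ne_zero {v : V} {w : W} (hv : v ≠ 0) (hw : w ≠ 0) :
    v ⊗ₜ[K] w ≠ 0 := by
  obtain ⟨φ, hφ⟩ := Module.Projective.exists_dual_eq_one K hv
  intro h
  simpa [hφ, hw] using congr(TensorProduct.lid K W (φ.rTensor W $h))

theorem TensorProduct.exists_tmul_mem_of_rTensor_mem {X : Submodule K (V ⊗[K] W)}
    (hX : ∀ E : End K V, ∀ y ∈ X, E.rTensor W y ∈ X) (v : V) {y : V ⊗[K] W} (hy : y ∈ X)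
    (hy0 : y ≠ 0) : ∃ w ≠ 0, v ⊗ₜ[K] w ∈ X := by
  classical
  let b := Basis.ofVectorSpace K V
  obtain ⟨i, hi⟩ : ∃ i, equivFinsuppOfBasisLeft b y i ≠ 0 := by
    by_contra! h
    exact hy0 ((equivFinsuppOfBasisLeft b).map_eq_zero_iff.mp (Finsupp.ext h))
  have hproj : ((b.coord i).smulRight v).rTensor W = TensorProduct.mk K V W v ∘ₗ
      (TensorProduct.lid K W ∘ₗ (b.coord i).rTensor W) :=
    TensorProduct.ext' fun v' w => by simp [TensorProduct.smul_tmul]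
  refine ⟨_, hi, ?_⟩
  simpa [hproj, equivFinsuppOfBasisLeft_apply] using hX ((b.coord i).smulRight v) y hy

def Submodule.endStabilizer {M : Type*} [AddCommGroup M] [Module K M] (p : Submodule K M) :
    Subalgebra K (End K M) where
  carrier := {f | ∀ x ∈ p, f x ∈ p}
  mul_mem' hf hg x hx := hf _ (hg x hx)
  one_mem' _ hx := hx
  add_mem' hf hg x hx := p.add_mem (hf x hx) (hg x hx)
  zero_mem' _ _ := p.zero_mem
  algebraMap_mem' r _ hx := p.smul_mem r hx

theorem Subalgebra.isSimpleModule_of_invariant [Nontrivial V] (A : Subalgebra K (End K V))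
    (hA : ∀ p : Submodule K V, (∀ a ∈ A, ∀ v ∈ p, a v ∈ p) → p = ⊥ ∨ p = ⊤) :
    IsSimpleModule A V where
  eq_bot_or_eq_top p := by
    simpa only [Submodule.restrictScalars_eq_bot_iff, Submodule.restrictScalars_eq_top_iff]
      using hA (p.restrictScalars K) fun a ha v hv => p.smul_mem ⟨a, ha⟩ hv

theorem exists_eq_smul_of_isSimpleModule [IsAlgClosed K] [FiniteDimensional K V] [Nontrivial V]
    (A : Subalgebra K (End K V)) [IsSimpleModule A V] (f : V →ₗ[A] V) :
    ∃ μ : K, f = μ • LinearMap.id := by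
  obtain ⟨μ, hμ⟩ := Module.End.exists_eigenvalue (f.restrictScalars K)
  obtain ⟨v, hv⟩ := hμ.exists_hasEigenvector
  refine ⟨μ, sub_eq_zero.mp (by_contra fun h => hv.2 ?_)⟩
  apply (LinearMap.bijective_of_ne_zero h).injective
  simpa [sub_eq_zero] using hv.apply_eq_smul

-- Burnside's theorem
theorem Subalgebra.eq_top_of_invariant [IsAlgClosed K] [FiniteDimensional K V] [Nontrivial V]
    (A : Subalgebra K (End K V))
    (hA : ∀ p : Submodule K V, (∀ a ∈ A, ∀ v ∈ p, a v ∈ p) → p = ⊥ ∨ p = ⊤) : A = ⊤ := by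
  classical
  have := A.isSimpleModule_of_invariant hA
  rw [eq_top_iff]
  intro T _
  let T' : End (End A V) V :=
    { toFun := T
      map_add' := T.map_add
      map_smul' := fun f v => by
        obtain ⟨μ, rfl⟩ := exists_eq_smul_of_isSimpleModule A f
        simp only [RingHom.id_apply, Module.End.smul_def, LinearMap.smul_apply,
          LinearMap.id_apply]
        exact T.map_smul μ v }
  let b := Module.finBasis K V
  obtain ⟨a, ha⟩ := jacobson_density T' (Finset.univ.image b)
  have : T = a := b.ext fun i => ha _ (Finset.mem_image_of_mem _ (Finset.mem_univ i))
  exact this ▸ a.2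

theorem rTensor_mem_of_irreducible [IsAlgClosed K] [FiniteDimensional K V] [Nontrivial V]
    {ι : Type*} (ρ : ι → End K V)
    (hρ : ∀ p : Submodule K V, (∀ i, ∀ v ∈ p, ρ i v ∈ p) → p = ⊥ ∨ p = ⊤)
    {X : Submodule K (V ⊗[K] W)} (hX : ∀ i, ∀ y ∈ X, (ρ i).rTensor W y ∈ X) (E : End K V) :
    ∀ y ∈ X, E.rTensor W y ∈ X := by
  let A := X.endStabilizer.comap (Module.End.rTensorAlgHom K V W)
  have hA : A = ⊤ := A.eq_top_of_invariant fun p hp => hρ p fun i => hp _ (hX i)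
  exact (hA ▸ Algebra.mem_top : E ∈ A)

section GradedTensor

variable {G : Type*} [AddCommGroup G] {S : AddSubgroup G} {Wg : G ⧸ S → Submodule K W}

variable (V) in
noncomputable def gradedTensorSpan (Wg : G ⧸ S → Submodule K W) :
    Submodule K (G →₀ V ⊗[K] W) :=
  Submodule.span K
    {x | ∃ (s : G) (v : V) (w : W), w ∈ Wg s ∧ x = Finsupp.single s (v ⊗ₜ[K] w)}

theorem gradedTensorSpan_ne_bot [Nontrivial V] [Nontrivial W] (htop : ⨆ γ, Wg γ = ⊤) :
    gradedTensorSpan V Wg ≠ ⊥ := by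
  obtain ⟨γ, hγ⟩ : ∃ γ, Wg γ ≠ ⊥ := by
    by_contra! h
    simp [h] at htop
  obtain ⟨s, rfl⟩ := QuotientAddGroup.mk_surjective γ
  obtain ⟨w, hw, hw0⟩ := (Submodule.ne_bot_iff _).mp hγ
  obtain ⟨v, hv⟩ := exists_ne (0 : V)
  exact (Submodule.ne_bot_iff _).mpr ⟨_, Submodule.subset_span ⟨s, v, w, hw, rfl⟩,
    by simpa using TensorProduct.tmul_ne_zero hv hw0⟩

theorem mem_of_single_tmul_mem_gradedTensorSpan {v : V} (hv : v ≠ 0) {s : G} {w : W}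
    (h : Finsupp.single s (v ⊗ₜ[K] w) ∈ gradedTensorSpan V Wg) : w ∈ Wg s := by
  classical
  obtain ⟨φ, hφ⟩ := Module.Projective.exists_dual_eq_one K hv
  let Φ := (TensorProduct.lid K W).toLinearMap ∘ₗ φ.rTensor W ∘ₗ Finsupp.lapply s
  have hspan : gradedTensorSpan V Wg ≤ (Wg s).comap Φ := by
    rw [gradedTensorSpan, Submodule.span_le]
    rintro _ ⟨t, v', w', hw', rfl⟩
    obtain rfl | hts := eq_or_ne t s
    · simpa [Φ] using (Wg t).smul_mem (φ v') hw'
    · simp [Φ, hts]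
  simpa [Φ, hφ] using hspan h

theorem eq_bot_or_eq_gradedTensorSpan [IsAlgClosed K] [Nontrivial V] [FiniteDimensional K W]
    [Nontrivial W] {T : G → End K W} (hind : iSupIndep Wg) (htop : ⨆ γ, Wg γ = ⊤)
    (hT : ∀ (n : G) γ, ∀ w ∈ Wg γ, T n w ∈ Wg (n + γ))
    (hcomm : ∀ n ∈ S, ∀ r, Commute (T n) (T r))
    (hirr : ∀ U : Submodule K W, (∀ n, ∀ w ∈ U, T n w ∈ U) →
      U = ⨆ γ, U ⊓ Wg γ → U = ⊥ ∨ U = ⊤)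
    {U : Submodule K (G →₀ V ⊗[K] W)} (hUF : U ≤ gradedTensorSpan V Wg)
    (hUcomp : ∀ x ∈ U, ∀ s, Finsupp.single s (x s) ∈ U)
    (hUE : ∀ (E : End K V) s y, Finsupp.single s y ∈ U →
      Finsupp.single s (E.rTensor W y) ∈ U)
    (hUS : ∀ n ∈ S, ∀ s v w, Finsupp.single s (v ⊗ₜ[K] w) ∈ U →
      Finsupp.single (n + s) (v ⊗ₜ[K] w) ∈ U)
    (hUT : ∀ r ∉ S, ∀ s v w, Finsupp.single s (v ⊗ₜ[K] w) ∈ U →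
      Finsupp.single (r + s) (v ⊗ₜ[K] T r w) ∈ U) :
    U = ⊥ ∨ U = gradedTensorSpan V Wg := by
  obtain ⟨v₁, hv₁⟩ := exists_ne (0 : V)
  let Y : G → Submodule K W := fun s =>
    U.comap (Finsupp.lsingle s ∘ₗ TensorProduct.mk K V W v₁)
  have hY : ∀ s w, w ∈ Y s ↔ Finsupp.single s (v₁ ⊗ₜ[K] w) ∈ U := fun _ _ => Iff.rfl
  refine (eq_bot_or_eq_of_shift_invariant hind htop hT hcomm hirr Y
    (fun s w hw => mem_of_single_tmul_mem_gradedTensorSpan hv₁ (hUF hw))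
    (fun n hn s w hw => hUS n hn s v₁ w hw) (fun r hr s w hw => hUT r hr s v₁ w hw)).imp
    (fun hbot => ?_) (fun htop => ?_)
  · refine eq_bot_iff.mpr fun x hx => (Submodule.mem_bot K).mpr ?_
    by_contra! hx0
    obtain ⟨s, hs⟩ := Finsupp.ne_iff.mp hx0
    obtain ⟨w, hw0, hw⟩ := TensorProduct.exists_tmul_mem_of_rTensor_mem
      (X := U.comap (Finsupp.lsingle s)) (fun E y hy => hUE E s y hy) v₁ (hUcomp x hx s) hs
    exact hw0 ((Submodule.mem_bot K).mp (hbot s ▸ (hY s w).mpr hw))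
  · refine le_antisymm hUF ?_
    rw [gradedTensorSpan, Submodule.span_le]
    rintro _ ⟨s, v, w, hw, rfl⟩
    obtain ⟨φ, hφ⟩ := Module.Projective.exists_dual_eq_one K hv₁
    simpa [hφ] using hUE (φ.smulRight v) s _ ((hY s w).mp (htop s ▸ hw))

end GradedTensor

end Tensor

section QuantumTorus

variable {d z : ℕ} {k : Fin z → ℕ} {qi : Fin z → ℂ} {e₀ e₁ : Fin z → Fin d}
  {q : Fin d → Fin d → ℂ}

theorem Xbig_eq_one {n : Fin d → ℤ} (hn : ∀ l, (k l : ℤ) ∣ n (e₀ l) ∧ (k l : ℤ) ∣ n (e₁ l)) :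
    Xbig k qi e₀ e₁ n = 1 := by
  ext a b
  simp [Xbig, zpowM, Int.emod_eq_zero_of_dvd (hn _).1, Int.emod_eq_zero_of_dvd (hn _).2,
    Matrix.one_apply, Finset.prod_boole, funext_iff]

variable (he₀ : ∀ i, (e₀ i : ℕ) = 2 * (i : ℕ)) (he₁ : ∀ i, (e₁ i : ℕ) = 2 * (i : ℕ) + 1)
  (hq1 : ∀ i, q (e₁ i) (e₀ i) = qi i)
  (hq3 : ∀ a b : Fin d,
    (∀ i, ¬(a = e₁ i ∧ b = e₀ i) ∧ ¬(a = e₀ i ∧ b = e₁ i)) → q a b = 1)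
include he₀ he₁ hq1 hq3

theorem qsigma_eq_prod (m n : Fin d → ℤ) :
    qsigma q m n = ∏ l, qi l ^ (n (e₁ l) * m (e₀ l)) := by
  classical
  have hlt : ∀ l, e₀ l < e₁ l := fun l => by simp [Fin.lt_def, he₀, he₁]
  have hinj : Function.Injective fun l => (e₁ l, e₀ l) := fun l l' h => by
    have := congrArg (fun p : Fin d × Fin d => (p.1 : ℕ)) h
    simp only [he₁] at this
    exact Fin.ext (by omega)
  rw [qsigma, ← Finset.prod_product', Finset.univ_product_univ,
    ← Finset.prod_subset (Finset.subset_univ (Finset.univ.image fun l => (e₁ l, e₀ l))),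
    Finset.prod_image hinj.injOn]
  · exact Finset.prod_congr rfl fun l _ => by simp [hlt l, hq1]
  · rintro ⟨a, b⟩ - hab
    refine ite_eq_right_iff.mpr fun hba => ?_
    rw [hq3 a b fun i => ⟨fun h => hab ?_, fun h => ?_⟩, _root_.one_zpow]
    · exact Finset.mem_image.mpr ⟨i, Finset.mem_univ _, by simp [h.1, h.2]⟩
    · exact (hlt i).not_gt (h.1 ▸ h.2 ▸ hba)

theorem mem_radSet_iff (hprim : ∀ i, IsPrimitiveRoot (qi i) (k i)) (m : Fin d → ℤ) :
    m ∈ radSet q ↔ ∀ l, (k l : ℤ) ∣ m (e₀ l) ∧ (k l : ℤ) ∣ m (e₁ l) := by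
  classical
  have hinj₀ : Function.Injective e₀ := fun l l' h =>
    Fin.ext (by simpa [he₀] using congrArg Fin.val h)
  have hinj₁ : Function.Injective e₁ := fun l l' h =>
    Fin.ext (by simpa [he₁] using congrArg Fin.val h)
  have hne : ∀ l l', e₀ l ≠ e₁ l' := fun l l' h => by
    have := congrArg Fin.val h
    simp only [he₀, he₁] at this
    omega
  simp only [radSet, Set.mem_ofPred_eq, qsigma_eq_prod he₀ he₁ hq1 hq3]
  constructor
  · intro h l
    have h₁ := h (Pi.single (e₁ l) 1)
    have h₀ := h (Pi.single (e₀ l) 1)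
    simp [Pi.single_apply, hinj₀.eq_iff, hinj₁.eq_iff, hne, (hne _ _).symm] at h₀ h₁
    exact ⟨(hprim l).zpow_eq_one_iff_dvd _ |>.mp h₁,
      (hprim l).zpow_eq_one_iff_dvd _ |>.mp h₀.symm⟩
  · intro h n
    rw [Finset.prod_eq_one fun l _ => ?_, Finset.prod_eq_one fun l _ => ?_]
    · exact (hprim l).zpow_eq_one_iff_dvd _ |>.mpr (dvd_mul_of_dvd_left (h l).2 _)
    · exact (hprim l).zpow_eq_one_iff_dvd _ |>.mpr (dvd_mul_of_dvd_right (h l).1 _)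

theorem exists_single_mem_radSet (hprim : ∀ i, IsPrimitiveRoot (qi i) (k i))
    (hk : ∀ i, 0 < k i) (j : Fin d) : ∃ c ≠ 0, Pi.single j c ∈ radSet q := by
  classical
  refine ⟨∏ l, (k l : ℤ), Finset.prod_ne_zero_iff.mpr fun l _ => by have := hk l; omega,
    (mem_radSet_iff he₀ he₁ hq1 hq3 hprim _).mpr fun l => ⟨?_, ?_⟩⟩ <;>
  · rw [Pi.single_apply]
    split_ifs
    exacts [Finset.dvd_prod_of_mem _ (Finset.mem_univ l), dvd_zero _]

end QuantumTorus

section TensorFieldModule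

theorem pairwise_exists_weight_ne {d : ℕ} (α : Fin d → ℂ) :
    Pairwise fun s t : Fin d → ℤ => ∃ u : Fin d → ℂ,
      ∑ i, u i * (α i + (s i : ℂ)) ≠ ∑ i, u i * (α i + (t i : ℂ)) := by
  intro s t hst
  obtain ⟨i, hi⟩ := Function.ne_iff.mp hst
  exact ⟨Pi.single i 1, by simpa [Pi.single_apply] using hi⟩

variable {d : ℕ} {α : Fin d → ℂ} {V W : Type*} [AddCommGroup V] [Module ℂ V]
  [AddCommGroup W] [Module ℂ W] {θ : Matrix (Fin d) (Fin d) ℂ →ₗ⁅ℂ⁆ End ℂ V}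
  {Dop : (Fin d → ℂ) → (Fin d → ℤ) → End ℂ ((Fin d → ℤ) →₀ V ⊗[ℂ] W)}
  {Zop : (Fin d → ℤ) → End ℂ ((Fin d → ℤ) →₀ V ⊗[ℂ] W)}

variable (hDop : ∀ (u : Fin d → ℂ) (m s : Fin d → ℤ) (v : V) (w : W),
      Dop u m (Finsupp.single s (v ⊗ₜ[ℂ] w))
        = Finsupp.single (m + s)
            (((∑ i, u i * (α i + (s i : ℂ))) • v
              + θ (Matrix.of fun i j => (m i : ℂ) * u j) v) ⊗ₜ[ℂ] w))
include hDop

theorem Dop_single (u : Fin d → ℂ) (m s : Fin d → ℤ) (y : V ⊗[ℂ] W) :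
    Dop u m (Finsupp.single s y) = Finsupp.single (m + s)
      ((∑ i, u i * (α i + (s i : ℂ))) • y
        + (θ (Matrix.of fun i j => (m i : ℂ) * u j)).rTensor W y) := by
  have : Dop u m ∘ₗ Finsupp.lsingle s = Finsupp.lsingle (m + s) ∘ₗ
      ((∑ i, u i * (α i + (s i : ℂ))) • LinearMap.id
        + (θ (Matrix.of fun i j => (m i : ℂ) * u j)).rTensor W) :=
    TensorProduct.ext' fun v w => by
      simp [hDop, TensorProduct.add_tmul, TensorProduct.smul_tmul']
  exact congr($this y)

theorem Dop_zero_apply (u : Fin d → ℂ) (x : (Fin d → ℤ) →₀ V ⊗[ℂ] W) (t : Fin d → ℤ) :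
    Dop u 0 x t = (∑ i, u i * (α i + (t i : ℂ))) • x t := by
  classical
  induction x using Finsupp.induction_linear with
  | zero => simp
  | add x x' hx hx' => simp [hx, hx']
  | single s y =>
    have h0 : (Matrix.of fun i j => ((0 : Fin d → ℤ) i : ℂ) * u j) = 0 := by
      ext
      simp
    rw [Dop_single hDop, h0, map_zero]
    obtain rfl | hst := eq_or_ne s t <;> simp [*]

theorem single_rTensor_mem [FiniteDimensional ℂ V] [Nontrivial V]
    (hVirr : ∀ U : Submodule ℂ V, (∀ M, ∀ v ∈ U, θ M v ∈ U) → U = ⊥ ∨ U = ⊤)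
    (hZop : ∀ (n s : Fin d → ℤ) (v : V) (w : W),
      Zop n (Finsupp.single s (v ⊗ₜ[ℂ] w)) = Finsupp.single (n + s) (v ⊗ₜ[ℂ] w))
    {R : Set (Fin d → ℤ)} (hRneg : ∀ m ∈ R, -m ∈ R) (hR : ∀ i, ∃ c ≠ 0, Pi.single i c ∈ R)
    {U : Submodule ℂ ((Fin d → ℤ) →₀ V ⊗[ℂ] W)}
    (hUD : ∀ u, ∀ m ∈ R, ∀ x ∈ U, Dop u m x ∈ U) (hUZ : ∀ n ∈ R, ∀ x ∈ U, Zop n x ∈ U)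
    (E : End ℂ V) (s : Fin d → ℤ) (y : V ⊗[ℂ] W) (hy : Finsupp.single s y ∈ U) :
    Finsupp.single s (E.rTensor W y) ∈ U := by
  have hZ : ∀ n t y, Zop n (Finsupp.single t y) = Finsupp.single (n + t) y := fun n t =>
    LinearMap.congr_fun (TensorProduct.ext' (g := Zop n ∘ₗ Finsupp.lsingle t)
      (h := Finsupp.lsingle (n + t)) (hZop n t))
  -- `D(u, m) - (u | α + t) t^m` acts on the `t`-component by `θ(m uᵀ)`, shifted by `m`
  have hvec : ∀ m ∈ R, ∀ (u : Fin d → ℂ) t y, Finsupp.single t y ∈ U →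
      Finsupp.single t ((θ (Matrix.of fun i j => (m i : ℂ) * u j)).rTensor W y) ∈ U := by
    intro m hm u t y hy
    have h := U.sub_mem (hUD u m hm _ hy)
      (U.smul_mem (∑ i, u i * (α i + (t i : ℂ))) (hUZ m hm _ hy))
    rw [Dop_single hDop, hZ, Finsupp.smul_single, ← Finsupp.single_sub, add_sub_cancel_left] at h
    simpa [hZ] using hUZ (-m) (hRneg m hm) _ h
  have hθ : ∀ M t y, Finsupp.single t y ∈ U → Finsupp.single t ((θ M).rTensor W y) ∈ U := by
    intro M
    induction M using Matrix.induction_on' with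
    | h_zero => simp
    | h_add M M' hM hM' =>
      intro t y hy
      rw [map_add, LinearMap.rTensor_add, LinearMap.add_apply, Finsupp.single_add]
      exact U.add_mem (hM t y hy) (hM' t y hy)
    | h_std_basis i j x =>
      obtain ⟨c, hc, hcR⟩ := hR i
      have hsingle : Matrix.single i j x = (x / c) • Matrix.of fun i' j' =>
          ((Pi.single i c : Fin d → ℤ) i' : ℂ) * (Pi.single j 1 : Fin d → ℂ) j' := by
        ext i' j'
        obtain rfl | hi := eq_or_ne i i' <;> obtain rfl | hj := eq_or_ne j j' <;>
          simp [*, Ne.symm]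
      intro t y hy
      rw [hsingle, map_smul, LinearMap.rTensor_smul, LinearMap.smul_apply, ← Finsupp.smul_single]
      exact U.smul_mem _ (hvec _ hcR _ t y hy)
  exact rTensor_mem_of_irreducible θ hVirr (X := U.comap (Finsupp.lsingle s))
    (fun M y hy => hθ M s y hy) E y hy

end TensorFieldModule

theorem stmt18_general {d z : ℕ}
    (k : Fin z → ℕ) (hk : ∀ i, 0 < k i)
    (qi : Fin z → ℂ) (hprim : ∀ i, IsPrimitiveRoot (qi i) (k i))
    (e₀ e₁ : Fin z → Fin d)
    (he₀ : ∀ i, (e₀ i : ℕ) = 2 * (i : ℕ)) (he₁ : ∀ i, (e₁ i : ℕ) = 2 * (i : ℕ) + 1)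
    (q : Fin d → Fin d → ℂ)
    (hq1 : ∀ i, q (e₁ i) (e₀ i) = qi i)
    (hq3 : ∀ a b : Fin d,
      (∀ i, ¬(a = e₁ i ∧ b = e₀ i) ∧ ¬(a = e₀ i ∧ b = e₁ i)) → q a b = 1)
    (S : AddSubgroup (Fin d → ℤ)) (hS : (S : Set (Fin d → ℤ)) = radSet q)
    (α : Fin d → ℂ)
    (V : Type*) [AddCommGroup V] [Module ℂ V] [FiniteDimensional ℂ V] [Nontrivial V]
    (θ : Matrix (Fin d) (Fin d) ℂ →ₗ⁅ℂ⁆ Module.End ℂ V)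
    (hVirr : ∀ U : Submodule ℂ V, (∀ M, ∀ v ∈ U, θ M v ∈ U) → U = ⊥ ∨ U = ⊤)
    (W : Type*) [AddCommGroup W] [Module ℂ W] [FiniteDimensional ℂ W] [Nontrivial W]
    (ψ : Matrix (Π i, Fin (k i)) (Π i, Fin (k i)) ℂ →ₗ⁅ℂ⁆ Module.End ℂ W)
    (Wg : ((Fin d → ℤ) ⧸ S) → Submodule ℂ W)
    (hWgindep : iSupIndep Wg) (hWgtop : (⨆ γ, Wg γ) = ⊤)
    (hWgcompat : ∀ (n : Fin d → ℤ) γ, ∀ w ∈ Wg γ,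
      ψ (Xbig k qi e₀ e₁ n) w ∈ Wg ((QuotientAddGroup.mk n : (Fin d → ℤ) ⧸ S) + γ))
    (hWirr : ∀ U : Submodule ℂ W,
      (∀ n : Fin d → ℤ, ∀ w ∈ U, ψ (Xbig k qi e₀ e₁ n) w ∈ U) →
      (U = ⨆ γ, U ⊓ Wg γ) → U = ⊥ ∨ U = ⊤)
    (Dop : (Fin d → ℂ) → (Fin d → ℤ) → Module.End ℂ ((Fin d → ℤ) →₀ (V ⊗[ℂ] W)))
    (Topr Zop : (Fin d → ℤ) → Module.End ℂ ((Fin d → ℤ) →₀ (V ⊗[ℂ] W)))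
    (hDop : ∀ (u : Fin d → ℂ) (m s : Fin d → ℤ) (v : V) (w : W),
      Dop u m (Finsupp.single s (v ⊗ₜ[ℂ] w))
        = Finsupp.single (m + s)
            (((∑ i, u i * (α i + (s i : ℂ))) • v
              + θ (Matrix.of fun i j => (m i : ℂ) * u j) v) ⊗ₜ[ℂ] w))
    (hTop : ∀ (r s : Fin d → ℤ) (v : V) (w : W),
      Topr r (Finsupp.single s (v ⊗ₜ[ℂ] w))
        = Finsupp.single (r + s) (v ⊗ₜ[ℂ] ψ (Xbig k qi e₀ e₁ r) w))
    (hZop : ∀ (n s : Fin d → ℤ) (v : V) (w : W),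
      Zop n (Finsupp.single s (v ⊗ₜ[ℂ] w))
        = Finsupp.single (n + s) (v ⊗ₜ[ℂ] w))
    (Fsub : Submodule ℂ ((Fin d → ℤ) →₀ (V ⊗[ℂ] W)))
    (hFsub : Fsub = Submodule.span ℂ
      {x : (Fin d → ℤ) →₀ (V ⊗[ℂ] W) | ∃ s v w,
        w ∈ Wg (QuotientAddGroup.mk s) ∧ x = Finsupp.single s (v ⊗ₜ[ℂ] w)}) :
    Fsub ≠ ⊥ ∧
    (∀ U : Submodule ℂ ((Fin d → ℤ) →₀ (V ⊗[ℂ] W)), U ≤ Fsub →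
      (∀ (u : Fin d → ℂ), ∀ m ∈ radSet q, ∀ x ∈ U, Dop u m x ∈ U) →
      (∀ r ∉ radSet q, ∀ x ∈ U, Topr r x ∈ U) →
      (∀ n ∈ radSet q, ∀ x ∈ U, Zop n x ∈ U) →
      U = ⊥ ∨ U = Fsub) ∧
    (∀ s : Fin d → ℤ,
      Module.finrank ℂ
        ↥(Fsub ⊓ ⨅ u : Fin d → ℂ,
            Module.End.eigenspace (Dop u 0) (∑ i, u i * (α i + (s i : ℂ))))
        ≤ Module.finrank ℂ V * Module.finrank ℂ W) := by
  classical
  have hS' : ∀ m, m ∈ S ↔ m ∈ radSet q := fun m => Set.ext_iff.mp hS m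
  have hX : ∀ n ∈ S, Xbig k qi e₀ e₁ n = 1 := fun n hn =>
    Xbig_eq_one ((mem_radSet_iff he₀ he₁ hq1 hq3 hprim n).mp ((hS' n).mp hn))
  have hweight := Dop_zero_apply hDop
  subst hFsub
  refine ⟨gradedTensorSpan_ne_bot hWgtop, fun U hUF hUD hUT hUZ => ?_, fun s => ?_⟩
  · refine eq_bot_or_eq_gradedTensorSpan (T := fun r => ψ (Xbig k qi e₀ e₁ r)) hWgindep hWgtop
      hWgcompat (fun n hn r => ?_) hWirr hUF
      (fun x hx s => Finsupp.single_apply_mem_of_diagonal hweight (pairwise_exists_weight_ne α)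
        (fun u x hx => hUD u 0 ((hS' 0).mp S.zero_mem) x hx) hx s)
      (single_rTensor_mem hDop hVirr hZop
        (fun m hm => (hS' _).mp (S.neg_mem ((hS' m).mpr hm)))
        (exists_single_mem_radSet he₀ he₁ hq1 hq3 hprim hk) hUD hUZ)
      (fun n hn s v w h => hZop n s v w ▸ hUZ n ((hS' n).mp hn) _ h)
      (fun r hr s v w h => hTop r s v w ▸ hUT r (mt (hS' r).mpr hr) _ h)
    rw [hX n hn]
    exact commute_iff_lie_eq.mpr (by rw [← ψ.map_lie, (Commute.one_left _).lie_eq, map_zero])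
  · have hle := Finsupp.iInf_eigenspace_le_range_lsingle hweight (pairwise_exists_weight_ne α) s
    refine (Submodule.finrank_mono (inf_le_right.trans hle)).trans_eq ?_
    rw [LinearMap.finrank_range_of_inj (Finsupp.single_injective s), Module.finrank_tensorProduct]

/-- if `V` is an irreducible `gl_d`-module and `W` an irreducible
`Γ`-graded `gl_N`-module, then the tensor field module
`F^α(V,W) = ⊕_s V ⊗ W_{s̄} ⊗ t^s` over `D ⋉ Z` (the centre `Z` acting by
`t^n·(v⊗w⊗t^s) = v⊗w⊗t^{n+s}`, `n ∈ R`) is irreducible, and every weight space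
(for the Cartan subalgebra `span{D(u,0)}`, the weight of `V⊗W_{s̄}⊗t^s` being
`(u|α+s)`) has dimension at most `dim V · dim W`, i.e. it is cuspidal. -/
theorem stmt18 {d z : ℕ} (h2z : 2 * z ≤ d)
    (k : Fin z → ℕ) (hk : ∀ i, 0 < k i)
    (qi : Fin z → ℂ) (hprim : ∀ i, IsPrimitiveRoot (qi i) (k i))
    (e₀ e₁ : Fin z → Fin d)
    (he₀ : ∀ i, (e₀ i : ℕ) = 2 * (i : ℕ)) (he₁ : ∀ i, (e₁ i : ℕ) = 2 * (i : ℕ) + 1)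
    (q : Fin d → Fin d → ℂ)
    (hq1 : ∀ i, q (e₁ i) (e₀ i) = qi i)
    (hq2 : ∀ i, q (e₀ i) (e₁ i) = (qi i)⁻¹)
    (hq3 : ∀ a b : Fin d,
      (∀ i, ¬(a = e₁ i ∧ b = e₀ i) ∧ ¬(a = e₀ i ∧ b = e₁ i)) → q a b = 1)
    (S : AddSubgroup (Fin d → ℤ)) (hS : (S : Set (Fin d → ℤ)) = radSet q)
    (α : Fin d → ℂ)
    (V : Type*) [AddCommGroup V] [Module ℂ V] [FiniteDimensional ℂ V] [Nontrivial V]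
    (θ : Matrix (Fin d) (Fin d) ℂ →ₗ⁅ℂ⁆ Module.End ℂ V)
    (hVirr : ∀ U : Submodule ℂ V, (∀ M, ∀ v ∈ U, θ M v ∈ U) → U = ⊥ ∨ U = ⊤)
    (W : Type*) [AddCommGroup W] [Module ℂ W] [FiniteDimensional ℂ W] [Nontrivial W]
    (ψ : Matrix (Π i, Fin (k i)) (Π i, Fin (k i)) ℂ →ₗ⁅ℂ⁆ Module.End ℂ W)
    (Wg : ((Fin d → ℤ) ⧸ S) → Submodule ℂ W)
    (hWgindep : iSupIndep Wg) (hWgtop : (⨆ γ, Wg γ) = ⊤)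
    (hWgcompat : ∀ (n : Fin d → ℤ) γ, ∀ w ∈ Wg γ,
      ψ (Xbig k qi e₀ e₁ n) w ∈ Wg ((QuotientAddGroup.mk n : (Fin d → ℤ) ⧸ S) + γ))
    (hWirr : ∀ U : Submodule ℂ W,
      (∀ n : Fin d → ℤ, ∀ w ∈ U, ψ (Xbig k qi e₀ e₁ n) w ∈ U) →
      (U = ⨆ γ, U ⊓ Wg γ) → U = ⊥ ∨ U = ⊤)
    (Dop : (Fin d → ℂ) → (Fin d → ℤ) → Module.End ℂ ((Fin d → ℤ) →₀ (V ⊗[ℂ] W)))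
    (Topr Zop : (Fin d → ℤ) → Module.End ℂ ((Fin d → ℤ) →₀ (V ⊗[ℂ] W)))
    (hDop : ∀ (u : Fin d → ℂ) (m s : Fin d → ℤ) (v : V) (w : W),
      Dop u m (Finsupp.single s (v ⊗ₜ[ℂ] w))
        = Finsupp.single (m + s)
            (((∑ i, u i * (α i + (s i : ℂ))) • v
              + θ (Matrix.of fun i j => (m i : ℂ) * u j) v) ⊗ₜ[ℂ] w))
    (hTop : ∀ (r s : Fin d → ℤ) (v : V) (w : W),
      Topr r (Finsupp.single s (v ⊗ₜ[ℂ] w))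
        = Finsupp.single (r + s) (v ⊗ₜ[ℂ] ψ (Xbig k qi e₀ e₁ r) w))
    (hZop : ∀ (n s : Fin d → ℤ) (v : V) (w : W),
      Zop n (Finsupp.single s (v ⊗ₜ[ℂ] w))
        = Finsupp.single (n + s) (v ⊗ₜ[ℂ] w))
    (Fsub : Submodule ℂ ((Fin d → ℤ) →₀ (V ⊗[ℂ] W)))
    (hFsub : Fsub = Submodule.span ℂ
      {x : (Fin d → ℤ) →₀ (V ⊗[ℂ] W) | ∃ s v w,
        w ∈ Wg (QuotientAddGroup.mk s) ∧ x = Finsupp.single s (v ⊗ₜ[ℂ] w)}) :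
    Fsub ≠ ⊥ ∧
    (∀ U : Submodule ℂ ((Fin d → ℤ) →₀ (V ⊗[ℂ] W)), U ≤ Fsub →
      (∀ (u : Fin d → ℂ), ∀ m ∈ radSet q, ∀ x ∈ U, Dop u m x ∈ U) →
      (∀ r ∉ radSet q, ∀ x ∈ U, Topr r x ∈ U) →
      (∀ n ∈ radSet q, ∀ x ∈ U, Zop n x ∈ U) →
      U = ⊥ ∨ U = Fsub) ∧
    (∀ s : Fin d → ℤ,
      Module.finrank ℂ
        ↥(Fsub ⊓ ⨅ u : Fin d → ℂ,
            Module.End.eigenspace (Dop u 0) (∑ i, u i * (α i + (s i : ℂ))))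
        ≤ Module.finrank ℂ V * Module.finrank ℂ W) :=
  stmt18_general k hk qi hprim e₀ e₁ he₀ he₁ q hq1 hq3 S hS α V θ hVirr W ψ Wg hWgindep hWgtop
    hWgcompat hWirr Dop Topr Zop hDop hTop hZop Fsub hFsub
end
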